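/- arXiv:2412.04697 — 3 statements merged into one kernel-verified Lean document; each statement's English description precedes it below -/
import Mathlib

section
/- Fix ε > 0, a threshold τ ∈ ℝ, and a finite sequence f_1, …, f_T of real-valued queries on datasets, each of sensitivity 1 (|f_i(D) − f_i(D′)| ≤ 1 for all neighboring datasets D, D′). The AboveThreshold algorithm on input D samples τ̂ = τ + Lap(2/ε) and independent noises v_i ~ Lap(4/ε) for i = 1, 2, …, and outputs the first index i ≤ T such that f_i(D) + v_i ≥ τ̂, or a distinguished symbol ⊥ if no index i ≤ T satisfies this. Then AboveThreshold satisfies (ε, 0)-differential privacy: for every pair of neighboring datasets D, D′ and every subset S of {1, …, T} ∪ {⊥}, Pr[AboveThreshold(D) ∈ S] ≤ exp(ε)·Pr[AboveThreshold(D′) ∈ S]. -/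
open MeasureTheory ProbabilityTheory Classical

/-- The Laplace distribution on ℝ with scale `b`: density `x ↦ (1/(2b)) exp (-|x|/b)`
with respect to Lebesgue measure. -/
noncomputable def laplace (b : ℝ) : Measure ℝ :=
  MeasureTheory.volume.withDensity fun x => ENNReal.ofReal ((1 / (2 * b)) * Real.exp (-|x| / b))

/-- The output space `{1, …, T} ∪ {⊥}` is modelled as `Option (Fin T)` with the
discrete σ-algebra. -/
instance (T : ℕ) : MeasurableSpace (Option (Fin T)) := ⊤

/-! Coupling. Suppose the run on `D` with noise `ω = (ν, v)` outputs `o`. Raise the threshold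
noise `ν` by `1` and, if `o = some i`, the noise `v i` by `2`. Since the queries have sensitivity
`1`, every query that was below the threshold on `D` is below the raised threshold on `D'`, and
query `i` stays above it, so the run on `D'` with the shifted noise outputs `o` as well.
Translating `Lap(b)` by `s` scales its density by at most `exp (|s| / b)`, so the shift costs a
factor at most `exp (1 · ε / 2 + 2 · ε / 4) = exp ε`; summing over the outputs in `S` gives the
bound. -/

open scoped ENNReal NNReal

namespace MeasureTheory.Measure

variable {ι : Type*} [Fintype ι] {α : ι → Type*} [∀ i, MeasurableSpace (α i)]

theorem pi_mono {μ ν : ∀ i, Measure (α i)} (h : ∀ i, μ i ≤ ν i) :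
    Measure.pi μ ≤ Measure.pi ν := by
  refine le_iff.2 fun s hs => ?_
  simp only [Measure.pi_def, toMeasure_apply _ _ hs]
  refine OuterMeasure.le_pi.2 (fun t _ => (OuterMeasure.pi_pi_le _ t).trans ?_) s
  exact Finset.prod_le_prod' fun i _ => h i (t i)

theorem pi_smul (μ : ∀ i, Measure (α i)) [∀ i, SigmaFinite (μ i)] (c : ι → ℝ≥0) :
    Measure.pi (fun i => c i • μ i) = (∏ i, c i) • Measure.pi μ :=
  pi_eq fun s _ => by
    rw [smul_apply, pi_pi, ENNReal.smul_def, smul_eq_mul, ENNReal.ofNNReal_finsetProd,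
      ← Finset.prod_mul_distrib]
    rfl

theorem pi_le_smul_pi {μ ν : ∀ i, Measure (α i)} [∀ i, SigmaFinite (ν i)] (c : ι → ℝ≥0)
    (h : ∀ i, μ i ≤ c i • ν i) : Measure.pi μ ≤ (∏ i, c i) • Measure.pi ν :=
  (pi_mono h).trans_eq (pi_smul ν c)

theorem map_add_right_withDensity {G : Type*} [MeasurableSpace G] [AddGroup G]
    [MeasurableAdd G] (μ : Measure G) [μ.IsAddRightInvariant] (p : G → ℝ≥0∞) (s : G) :
    (μ.withDensity p).map (· + s) = μ.withDensity fun x => p (x - s) := by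
  ext A hA
  rw [map_apply (measurable_add_const s) hA, withDensity_apply _ (measurable_add_const s hA),
    withDensity_apply _ hA, ← (measurePreserving_add_right μ s).setLIntegral_comp_preimage_emb
      (measurableEmbedding_addRight s) (fun x => p (x - s)) A]
  simp only [add_sub_cancel_right]

end MeasureTheory.Measure

instance (b : ℝ) : SigmaFinite (laplace b) := by
  unfold laplace; infer_instance

theorem laplace_density_sub_le {b : ℝ} (hb : 0 < b) (x s : ℝ) :
    1 / (2 * b) * Real.exp (-|x - s| / b) ≤
      Real.exp (|s| / b) * (1 / (2 * b) * Real.exp (-|x| / b)) := by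
  rw [mul_left_comm, ← Real.exp_add, ← add_div]
  gcongr
  linarith [abs_sub_abs_le_abs_sub x s]

theorem laplace_map_add_le {b : ℝ} (hb : 0 < b) (s : ℝ) :
    (laplace b).map (· + s) ≤ (Real.exp (|s| / b)).toNNReal • laplace b := by
  rw [laplace, Measure.map_add_right_withDensity, ENNReal.smul_def,
    ← withDensity_smul' _ _ ENNReal.coe_ne_top]
  refine withDensity_mono (ae_of_all _ fun x => ?_)
  simp only [Pi.smul_apply, smul_eq_mul]
  rw [← ENNReal.ofReal, ← ENNReal.ofReal_mul (Real.exp_nonneg _)]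
  exact ENNReal.ofReal_le_ofReal (laplace_density_sub_le hb x s)

theorem laplace_prod_pi_map_add_le {ι : Type*} [Fintype ι] {b₁ b₂ : ℝ} (hb₁ : 0 < b₁)
    (hb₂ : 0 < b₂) (v : ℝ × (ι → ℝ)) :
    ((laplace b₁).prod (Measure.pi fun _ : ι => laplace b₂)).map (· + v) ≤
      ENNReal.ofReal (Real.exp (|v.1| / b₁ + ∑ i, |v.2 i| / b₂)) •
        (laplace b₁).prod (Measure.pi fun _ : ι => laplace b₂) := by
  have : ∀ i, SigmaFinite ((laplace b₂).map (· + v.2 i)) := fun i =>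
    (measurableEmbedding_addRight _).sigmaFinite_map
  have hsplit : (· + v) = Prod.map (· + v.1) (fun (x : ι → ℝ) i => x i + v.2 i) := rfl
  rw [hsplit, ← Measure.map_prod_map _ _ (measurable_add_const _)
    (measurable_pi_lambda _ fun i => (measurable_pi_apply i).add_const _),
    Measure.pi_map_pi fun i => (measurable_add_const _).aemeasurable]
  calc ((laplace b₁).map (· + v.1)).prod (Measure.pi fun i => (laplace b₂).map (· + v.2 i))
      ≤ ((Real.exp (|v.1| / b₁)).toNNReal • laplace b₁).prod
          ((∏ i, (Real.exp (|v.2 i| / b₂)).toNNReal) • Measure.pi fun _ : ι => laplace b₂) :=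
        Measure.prod_mono (laplace_map_add_le hb₁ _)
          (Measure.pi_le_smul_pi _ fun i => laplace_map_add_le hb₂ _)
    _ = _ := by
      rw [Measure.prod_smul_left, Measure.prod_smul_right, smul_smul, ENNReal.smul_def]
      congr 2
      rw [Real.exp_add, Real.exp_sum, Real.toNNReal_mul (Real.exp_nonneg _),
        Real.toNNReal_prod_of_nonneg fun i _ => Real.exp_nonneg _]

theorem measurable_fin_find? {X : Type*} [MeasurableSpace X] {n : ℕ} {p : Fin n → X → Bool}
    (hp : ∀ i, Measurable (p i)) : Measurable fun x => Fin.find? (p · x) := by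
  refine measurable_to_countable' fun o => ?_
  cases o with
  | none =>
    simp only [Set.preimage, Set.mem_singleton_iff, Fin.find?_eq_none_iff, Set.ofPred_forall]
    exact .iInter fun i => hp i (measurableSet_singleton false)
  | some i =>
    simp only [Set.preimage, Set.mem_singleton_iff, Fin.find?_eq_some_iff, Set.ofPred_and,
      Set.ofPred_forall]
    exact (hp i (measurableSet_singleton true)).inter
      (.iInter fun j => .iInter fun _ => hp j (measurableSet_singleton false))

theorem measure_preimage_le_mul_of_coupling {X Y : Type*} [MeasurableSpace X] [Countable Y]
    {μ : Measure X} {g g' : X → Y} (hg' : ∀ y, MeasurableSet (g' ⁻¹' {y})) {C : ℝ≥0∞}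
    (φ : Y → X → X) (hφ : ∀ y, Measurable (φ y)) (hμ : ∀ y, μ.map (φ y) ≤ C • μ)
    (hcoupling : ∀ x, g' (φ (g x) x) = g x) (S : Set Y) :
    μ (g ⁻¹' S) ≤ C * μ (g' ⁻¹' S) := by
  have hfiber : ∀ y, μ (g ⁻¹' {y}) ≤ C * μ (g' ⁻¹' {y}) := fun y =>
    calc μ (g ⁻¹' {y}) ≤ μ (φ y ⁻¹' (g' ⁻¹' {y})) :=
          measure_mono fun x (hx : g x = y) => show g' (φ y x) = y from hx ▸ hcoupling x
      _ = μ.map (φ y) (g' ⁻¹' {y}) := (Measure.map_apply (hφ y) (hg' y)).symm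
      _ ≤ C * μ (g' ⁻¹' {y}) := Measure.le_iff'.1 (hμ y) _
  calc μ (g ⁻¹' S) ≤ ∑' y : S, μ (g ⁻¹' {(y : Y)}) := by
        rw [← Set.biUnion_preimage_singleton]; exact measure_biUnion_le μ S.to_countable _
    _ ≤ ∑' y : S, C * μ (g' ⁻¹' {(y : Y)}) := ENNReal.tsum_le_tsum fun y => hfiber y
    _ = C * μ (g' ⁻¹' S) := by
        rw [ENNReal.tsum_mul_left, tsum_measure_preimage_singleton S.to_countable fun y _ => hg' y]

section AboveThreshold

variable {T : ℕ}

noncomputable def firstAbove (τ : ℝ) (q : Fin T → ℝ) (ω : ℝ × (Fin T → ℝ)) : Option (Fin T) :=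
  Fin.find? fun i => q i + ω.2 i ≥ τ + ω.1

theorem measurable_firstAbove (τ : ℝ) (q : Fin T → ℝ) : Measurable (firstAbove τ q) :=
  measurable_fin_find? fun i => measurable_to_bool <| by
    simp only [Set.preimage, Set.mem_singleton_iff, decide_eq_true_eq, ge_iff_le]
    exact measurableSet_le (measurable_const.add measurable_fst)
      (measurable_const.add (measurable_snd.eval (X := fun _ : Fin T => ℝ) (a := i)))

noncomputable def firstAboveShift : Option (Fin T) → ℝ × (Fin T → ℝ)
  | none => (1, 0)
  | some i => (1, Pi.single i 2)

theorem sum_abs_firstAboveShift_snd (o : Option (Fin T)) :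
    ∑ i, |(firstAboveShift o).2 i| ≤ 2 := by
  cases o with
  | none => simp [firstAboveShift]
  | some i => simp [firstAboveShift, Pi.single_apply, apply_ite]

theorem firstAbove_add_firstAboveShift {τ : ℝ} {q q' : Fin T → ℝ}
    (hq : ∀ i, |q i - q' i| ≤ 1) (ω : ℝ × (Fin T → ℝ)) :
    firstAbove τ q' (ω + firstAboveShift (firstAbove τ q ω)) = firstAbove τ q ω := by
  have hq' := fun i => abs_le.1 (hq i)
  cases h : firstAbove τ q ω with
  | none =>
    simp only [firstAbove, Fin.find?_eq_none_iff, decide_eq_false_iff_not, not_le,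
      ge_iff_le] at h ⊢
    intro j
    simp only [firstAboveShift, Prod.fst_add, Prod.snd_add, Pi.add_apply, Pi.zero_apply]
    linarith [h j, hq' j]
  | some i =>
    simp only [firstAbove, Fin.find?_eq_some_iff, decide_eq_true_eq, decide_eq_false_iff_not,
      not_le, ge_iff_le] at h ⊢
    obtain ⟨hi, hbefore⟩ := h
    simp only [firstAboveShift, Prod.fst_add, Prod.snd_add, Pi.add_apply, Pi.single_eq_same]
    refine ⟨by linarith [hq' i], fun j hj => ?_⟩
    rw [Pi.single_eq_of_ne hj.ne]
    linarith [hbefore j hj, hq' j]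

theorem laplace_prod_pi_map_add_firstAboveShift_le {ε : ℝ} (hε : 0 < ε)
    (o : Option (Fin T)) :
    ((laplace (2 / ε)).prod (Measure.pi fun _ : Fin T => laplace (4 / ε))).map
        (· + firstAboveShift o) ≤
      ENNReal.ofReal (Real.exp ε) •
        (laplace (2 / ε)).prod (Measure.pi fun _ : Fin T => laplace (4 / ε)) := by
  refine (laplace_prod_pi_map_add_le (by positivity) (by positivity) _).trans ?_
  gcongr
  have hsum := sum_abs_firstAboveShift_snd o
  have hfst : |(firstAboveShift o).1| = 1 := by cases o <;> simp [firstAboveShift]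
  rw [hfst, ← Finset.sum_div, div_div_eq_mul_div, div_div_eq_mul_div]
  nlinarith [mul_le_mul_of_nonneg_right hsum hε.le]

end AboveThreshold

/-- `AboveThreshold` on input `D`: sample `τ̂ = τ + Lap(2/ε)` and independent noises
`v i ~ Lap(4/ε)`, and output the first index `i` with `f i D + v i ≥ τ̂`, or `⊥` (`none`)
if there is none. It satisfies `(ε, 0)`-differential privacy. -/
theorem aboveThreshold_dp
    {Dataset : Type*} (Neighbor : Dataset → Dataset → Prop)
    (ε : ℝ) (hε : 0 < ε) (τ : ℝ) (T : ℕ) (f : Fin T → Dataset → ℝ)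
    (hsens : ∀ i D D', Neighbor D D' → |f i D - f i D'| ≤ 1)
    (AboveThreshold : Dataset → Measure (Option (Fin T)))
    (hAT : ∀ D, AboveThreshold D =
      Measure.map
        (fun ω : ℝ × (Fin T → ℝ) => Fin.find? fun i => f i D + ω.2 i ≥ τ + ω.1)
        ((laplace (2 / ε)).prod (Measure.pi fun _ : Fin T => laplace (4 / ε))))
    (D D' : Dataset) (hN : Neighbor D D') (S : Set (Option (Fin T))) :
    AboveThreshold D S ≤ ENNReal.ofReal (Real.exp ε) * AboveThreshold D' S := by
  have hAT' : ∀ D, AboveThreshold D =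
      ((laplace (2 / ε)).prod (Measure.pi fun _ : Fin T => laplace (4 / ε))).map
        (firstAbove τ (f · D)) := hAT
  rw [hAT' D, hAT' D', Measure.map_apply (measurable_firstAbove τ (f · D)) .of_discrete,
    Measure.map_apply (measurable_firstAbove τ (f · D')) .of_discrete]
  exact measure_preimage_le_mul_of_coupling (g := firstAbove τ (f · D))
    (fun _ => measurable_firstAbove τ (f · D') .of_discrete) (fun o => (· + firstAboveShift o))
    (fun _ => measurable_add_const _) (laplace_prod_pi_map_add_firstAboveShift_le hε)
    (firstAbove_add_firstAboveShift fun i => hsens i D D' hN) S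
end

section
/- Let b > 0 and let X be a random variable with distribution Lap(b). For all real numbers μ, μ′ with |μ − μ′| ≤ Δ and every Borel set S ⊆ ℝ, Pr[μ + X ∈ S] ≤ exp(Δ/b)·Pr[μ′ + X ∈ S]. Consequently, for any real-valued query f on datasets with |f(D) − f(D′)| ≤ Δ for all neighboring D, D′, the Laplace mechanism D ↦ f(D) + Lap(Δ/ε) satisfies (ε, 0)-differential privacy. -/
/-!
The density of `μ + Lap(b)` at `y` is proportional to `exp (-|y - μ| / b)`. By the triangle
inequality, moving the centre by at most `Δ` changes this density by a factor at most
`exp (Δ / b)`, and integrating the pointwise bound over `S` gives the shift bound.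
The Laplace mechanism is the case `b = Δ / ε`.
-/

open MeasureTheory ProbabilityTheory

open Real

theorem MeasureTheory.Measure.map_add_left_withDensity {G : Type*} [MeasurableSpace G] [AddGroup G]
    [MeasurableAdd G] (μ : Measure G) [μ.IsAddLeftInvariant] {f : G → ENNReal}
    (hf : Measurable f) (a : G) :
    (μ.withDensity f).map (a + ·) = μ.withDensity fun x => f (-a + x) := by
  ext s hs
  rw [Measure.map_apply (measurable_const_add a) hs,
    withDensity_apply _ (measurable_const_add a hs), withDensity_apply _ hs,
    ← (measurePreserving_add_left μ a).setLIntegral_comp_preimage hs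
      (f := fun x => f (-a + x)) (hf.comp (measurable_const_add (-a)))]
  simp only [neg_add_cancel_left]

noncomputable def laplacePDF (b x : ℝ) : ℝ := 1 / (2 * b) * exp (-|x| / b)

theorem laplace_eq_withDensity (b : ℝ) :
    laplace b = volume.withDensity fun x => ENNReal.ofReal (laplacePDF b x) := rfl

theorem measurable_laplacePDF (b : ℝ) : Measurable (laplacePDF b) := by
  unfold laplacePDF; fun_prop

theorem laplacePDF_add_le {b : ℝ} (hb : 0 < b) (x t : ℝ) :
    laplacePDF b (x + t) ≤ exp (|t| / b) * laplacePDF b x := by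
  have hexp : -|x + t| / b ≤ |t| / b + -|x| / b := by
    rw [← add_div]
    gcongr
    have : |x| ≤ |x + t| + |t| := by simpa using abs_sub (x + t) t
    linarith
  calc laplacePDF b (x + t) ≤ 1 / (2 * b) * exp (|t| / b + -|x| / b) := by
        unfold laplacePDF; gcongr
    _ = exp (|t| / b) * laplacePDF b x := by rw [laplacePDF, exp_add]; ring

theorem laplacePDF_nonneg {b : ℝ} (hb : 0 ≤ b) (x : ℝ) : 0 ≤ laplacePDF b x := by
  unfold laplacePDF; positivity

theorem laplace_of_nonpos {b : ℝ} (hb : b ≤ 0) : laplace b = 0 := by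
  have hpdf (x : ℝ) : laplacePDF b x ≤ 0 :=
    mul_nonpos_of_nonpos_of_nonneg (by simp only [one_div, inv_nonpos]; linarith) (exp_nonneg _)
  simp [laplace_eq_withDensity, ENNReal.ofReal_eq_zero.2 (hpdf _)]

theorem laplace_map_add_le_s1 {b Δ μ μ' : ℝ} (hb : 0 < b) (hμ : |μ - μ'| ≤ Δ) :
    (laplace b).map (μ + ·) ≤ ENNReal.ofReal (exp (Δ / b)) • (laplace b).map (μ' + ·) := by
  have hmeas : Measurable fun x => ENNReal.ofReal (laplacePDF b x) :=
    (measurable_laplacePDF b).ennreal_ofReal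
  rw [laplace_eq_withDensity, Measure.map_add_left_withDensity _ hmeas,
    Measure.map_add_left_withDensity _ hmeas, ← withDensity_smul' _ _ ENNReal.ofReal_ne_top]
  refine withDensity_mono (ae_of_all _ fun y => ?_)
  have hpdf : laplacePDF b (-μ + y) ≤ exp (Δ / b) * laplacePDF b (-μ' + y) := calc
    laplacePDF b (-μ + y) = laplacePDF b ((-μ' + y) + (μ' - μ)) := by ring_nf
    _ ≤ exp (|μ' - μ| / b) * laplacePDF b (-μ' + y) := laplacePDF_add_le hb _ _
    _ ≤ exp (Δ / b) * laplacePDF b (-μ' + y) := by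
        gcongr
        · exact laplacePDF_nonneg hb.le _
        · rwa [abs_sub_comm]
  simpa [ENNReal.ofReal_mul (exp_nonneg _)] using ENNReal.ofReal_le_ofReal hpdf

/-- Laplace shift bound and the Laplace mechanism.  (1) If `X ~ Lap(b)` and
`|μ - μ'| ≤ Δ`, then `Pr[μ + X ∈ S] ≤ exp (Δ/b) * Pr[μ' + X ∈ S]` for every Borel `S`.
(2) Consequently, for a query `f` of sensitivity `Δ` (w.r.t. a neighboring relation),
the mechanism `D ↦ f D + Lap(Δ/ε)` is `(ε, 0)`-differentially private. -/
theorem laplace_mechanism_dp (b : ℝ) (hb : 0 < b) (Δ : ℝ) :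
    (∀ μ μ' : ℝ, |μ - μ'| ≤ Δ → ∀ S : Set ℝ, MeasurableSet S →
      Measure.map (fun x => μ + x) (laplace b) S ≤
        ENNReal.ofReal (Real.exp (Δ / b)) * Measure.map (fun x => μ' + x) (laplace b) S)
    ∧
    (∀ (Dataset : Type) (Neighbor : Dataset → Dataset → Prop) (ε : ℝ), 0 < ε →
      ∀ f : Dataset → ℝ, (∀ D D', Neighbor D D' → |f D - f D'| ≤ Δ) →
        ∀ D D', Neighbor D D' → ∀ S : Set ℝ, MeasurableSet S →
          Measure.map (fun x => f D + x) (laplace (Δ / ε)) S ≤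
            ENNReal.ofReal (Real.exp ε) * Measure.map (fun x => f D' + x) (laplace (Δ / ε)) S) := by
  refine ⟨fun μ μ' hμ S _ => Measure.le_iff'.1 (laplace_map_add_le_s1 hb hμ) S, ?_⟩
  intro Dataset Neighbor ε _ f hf D D' hDD' S _
  -- a nonpositive scale makes `laplace` the zero measure, since `1 / (2 * b) ≤ 0`
  rcases le_or_gt (Δ / ε) 0 with hscale | hscale
  · simp [laplace_of_nonpos hscale]
  · have hΔ : Δ ≠ 0 := fun h => by simp [h] at hscale
    simpa [div_div_cancel₀ hΔ] using
      Measure.le_iff'.1 (laplace_map_add_le_s1 hscale (hf D D' hDD')) S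
end

section
/- Let ε ≥ 0, δ ∈ [0,1], X a type, n ≥ 1, and let A be a randomized algorithm mapping each tuple in Xⁿ to a probability measure on a measurable output space Ω. Suppose that for all tuples L, L″ ∈ Xⁿ differing in at most one position and all measurable S ⊆ Ω, A(L)(S) ≤ exp(ε)·A(L″)(S) + δ. Let L, L′ ∈ Xⁿ be tuples whose underlying multisets differ by replacing a single element (there exist a multiset E of size n − 1 and d, d′ ∈ X with multiset(L) = E + {d} and multiset(L′) = E + {d′}). Then, with π a uniformly random permutation of {1, …, n} independent of A's internal randomness, for every measurable S ⊆ Ω: Pr[A(L ∘ π) ∈ S] ≤ exp(ε)·Pr[A(L′ ∘ π) ∈ S] + δ. -/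
open MeasureTheory ProbabilityTheory

/-- The symmetric group carries the discrete σ-algebra. -/
instance (n : ℕ) : MeasurableSpace (Equiv.Perm (Fin n)) := ⊤

/-- The multiset of entries of a tuple `L ∈ Xⁿ`. -/
def tupleMultiset {X : Type*} {n : ℕ} (L : Fin n → X) : Multiset X :=
  (Finset.univ : Finset (Fin n)).val.map L

/-!
If the multisets of `L` and `L'` differ by replacing one element, some permutation `τ` makes
`L` and `L' ∘ τ` differ in at most one position. Then `L ∘ π` and `L' ∘ τ ∘ π` are neighbours for
every `π`, so the hypothesis bounds each component of the mixture over `π`; averaging such bounds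
preserves them, and `π ↦ τ ∘ π` leaves the uniform distribution on permutations unchanged.
-/

open Finset

section Tuples

variable {ι X : Type*} [Fintype ι]

theorem exists_perm_comp_eq_of_map_univ_eq {f g : ι → X}
    (h : univ.val.map f = univ.val.map g) : ∃ σ : Equiv.Perm ι, ∀ i, g (σ i) = f i := by
  classical
  -- equal multisets have equinumerous fibres; bijections between the fibres glue to `σ`
  have hfiber : ∀ x, Fintype.card {i // f i = x} = Fintype.card {i // g i = x} := fun x => by
    have hcount := congrArg (Multiset.count x) h
    simp only [Multiset.count_map, @eq_comm _ x] at hcount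
    simp only [Fintype.card_subtype, Finset.card_def, Finset.filter_val]
    convert hcount
  exact ⟨Equiv.ofFiberEquiv fun x => Fintype.equivOfCardEq (hfiber x),
    Equiv.ofFiberEquiv_map _⟩

theorem map_univ_update [DecidableEq ι] {f : ι → X} {E : Multiset X} {j : ι}
    (hf : univ.val.map f = E + {f j}) (y : X) :
    univ.val.map (Function.update f j y) = E + {y} := by
  have hsplit : ∀ g : ι → X, univ.val.map g = g j ::ₘ (univ.erase j).val.map g := fun g => by
    rw [Finset.erase_val, ← Multiset.map_cons, Multiset.cons_erase (mem_univ j)]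
  have hE : (univ.erase j).val.map f = E := by
    rw [hsplit, add_comm, Multiset.singleton_add] at hf
    exact (Multiset.cons_inj_right _).mp hf
  rw [hsplit, Function.update_self, add_comm, Multiset.singleton_add, ← hE]
  congr 1
  exact Multiset.map_congr rfl fun i hi => Function.update_of_ne (ne_of_mem_erase hi) _ _

theorem exists_perm_subsingleton_ne_of_map_univ_eq_add_singleton {f g : ι → X}
    {E : Multiset X} {x y : X} (hf : univ.val.map f = E + {x}) (hg : univ.val.map g = E + {y}) :
    ∃ σ : Equiv.Perm ι, {i | f i ≠ g (σ i)}.Subsingleton := by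
  classical
  obtain ⟨j, -, rfl⟩ : ∃ j ∈ univ.val, f j = x :=
    Multiset.mem_map.mp (hf ▸ Multiset.mem_add.mpr (Or.inr (Multiset.mem_singleton_self x)))
  -- overwriting the entry `x` of `f` by `y` gives a tuple with the multiset of `g`
  obtain ⟨σ, hσ⟩ := exists_perm_comp_eq_of_map_univ_eq ((map_univ_update hf y).trans hg.symm)
  refine ⟨σ, (Set.subsingleton_singleton (a := j)).anti fun i hi => ?_⟩
  by_contra hij
  exact hi (by rw [hσ, Function.update_of_ne hij])

end Tuples

section Mixtures

variable {α Ω : Type*} [MeasurableSpace α] [MeasurableSpace Ω]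

theorem MeasureTheory.Measure.bind_apply_le_mul_add (p : Measure α) [IsProbabilityMeasure p]
    {μ ν : α → Measure Ω} (hμ : Measurable μ) (hν : Measurable ν) {S : Set Ω}
    (hS : MeasurableSet S) {c δ : ENNReal} (h : ∀ a, μ a S ≤ c * ν a S + δ) :
    p.bind μ S ≤ c * p.bind ν S + δ := by
  rw [Measure.bind_apply hS hμ.aemeasurable, Measure.bind_apply hS hν.aemeasurable]
  calc ∫⁻ a, μ a S ∂p ≤ ∫⁻ a, c * ν a S + δ ∂p := lintegral_mono h
    _ = c * ∫⁻ a, ν a S ∂p + δ := by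
      have hνS : Measurable fun a => ν a S := (Measure.measurable_coe hS).comp hν
      rw [lintegral_add_right _ measurable_const, lintegral_const_mul c hνS,
        lintegral_const, measure_univ, mul_one]

theorem PMF.toMeasure_uniformOfFintype_bind_comp_equiv [Fintype α] [Nonempty α]
    [DiscreteMeasurableSpace α] (f : α → Measure Ω) (e : α ≃ α) :
    (PMF.uniformOfFintype α).toMeasure.bind (f ∘ e) =
      (PMF.uniformOfFintype α).toMeasure.bind f := by
  ext S hS
  rw [Measure.bind_apply hS Measurable.of_discrete.aemeasurable,
    Measure.bind_apply hS Measurable.of_discrete.aemeasurable, lintegral_fintype, lintegral_fintype]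
  simp only [PMF.toMeasure_apply_singleton _ _ (.of_discrete), PMF.uniformOfFintype_apply]
  exact e.sum_comp fun a => f a S * _

end Mixtures

theorem dp_of_random_permutation_general
    {X : Type*} {Ω : Type*} [MeasurableSpace Ω]
    (ε δ : ℝ)
    (n : ℕ)
    (A : (Fin n → X) → Measure Ω)
    (hA : ∀ L L'' : Fin n → X, Set.Subsingleton {i : Fin n | L i ≠ L'' i} →
      ∀ S : Set Ω, MeasurableSet S →
        A L S ≤ ENNReal.ofReal (Real.exp ε) * A L'' S + ENNReal.ofReal δ)
    (L L' : Fin n → X)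
    (E : Multiset X) (d d' : X)
    (hL : tupleMultiset L = E + {d}) (hL' : tupleMultiset L' = E + {d'})
    (S : Set Ω) (hS : MeasurableSet S) :
    ((PMF.uniformOfFintype (Equiv.Perm (Fin n))).toMeasure.bind
        fun π => A fun i => L (π i)) S ≤
      ENNReal.ofReal (Real.exp ε) *
        ((PMF.uniformOfFintype (Equiv.Perm (Fin n))).toMeasure.bind
          fun π => A fun i => L' (π i)) S + ENNReal.ofReal δ := by
  obtain ⟨τ, hτ⟩ := exists_perm_subsingleton_ne_of_map_univ_eq_add_singleton hL hL'
  calc _ ≤ ENNReal.ofReal (Real.exp ε) *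
          ((PMF.uniformOfFintype (Equiv.Perm (Fin n))).toMeasure.bind
            ((fun π => A fun i => L' (π i)) ∘ Equiv.mulLeft τ)) S + ENNReal.ofReal δ :=
        Measure.bind_apply_le_mul_add _ .of_discrete .of_discrete hS fun π =>
          hA _ _ (hτ.preimage π.injective) S hS
    _ = _ := by rw [PMF.toMeasure_uniformOfFintype_bind_comp_equiv]

/-- Privacy amplification by a uniformly random permutation.  If a randomized algorithm
`A` on tuples satisfies the `(ε, δ)` indistinguishability bound on tuples differing in at
most one position, and the multisets of `L` and `L'` differ by replacing a single
element, then the mechanisms `π ↦ A (L ∘ π)` and `π ↦ A (L' ∘ π)` (with `π` uniform on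
the symmetric group, independent of `A`'s internal randomness) satisfy the same
`(ε, δ)` bound. -/
theorem dp_of_random_permutation
    {X : Type*} {Ω : Type*} [MeasurableSpace Ω]
    (ε δ : ℝ) (hε : 0 ≤ ε) (hδ₀ : 0 ≤ δ) (hδ₁ : δ ≤ 1)
    (n : ℕ) (hn : 1 ≤ n)
    (A : (Fin n → X) → Measure Ω)
    (hA : ∀ L L'' : Fin n → X, Set.Subsingleton {i : Fin n | L i ≠ L'' i} →
      ∀ S : Set Ω, MeasurableSet S →
        A L S ≤ ENNReal.ofReal (Real.exp ε) * A L'' S + ENNReal.ofReal δ)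
    (L L' : Fin n → X)
    (E : Multiset X) (hE : Multiset.card E = n - 1) (d d' : X)
    (hL : tupleMultiset L = E + {d}) (hL' : tupleMultiset L' = E + {d'})
    (S : Set Ω) (hS : MeasurableSet S) :
    ((PMF.uniformOfFintype (Equiv.Perm (Fin n))).toMeasure.bind
        fun π => A fun i => L (π i)) S ≤
      ENNReal.ofReal (Real.exp ε) *
        ((PMF.uniformOfFintype (Equiv.Perm (Fin n))).toMeasure.bind
          fun π => A fun i => L' (π i)) S + ENNReal.ofReal δ :=
  dp_of_random_permutation_general ε δ n A hA L L' E d d' hL hL' S hS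
end
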